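/- Let 3 ≤ k < c, let ε ∈ {−1,+1}, set x = ε·(c^{−1/2},…,c^{−1/2}) ∈ ℝ^c, and let τ ∈ ℂ∖{0} satisfy τ^{2−k} = k·e_k(x); set z = τ·x, g(y) = −(y_1²+⋯+y_c²)/2 + e_k(y), and g̃ = (k−1)/(c−1). Then every diagonal entry of (Hess g)(z) equals −1, every off-diagonal entry of (Hess g)(z) equals g̃, and det((Hess g)(z)) = (−1)^{c−1} · (g̃+1)^{c−1} · (g̃·(c−1) − 1). -/

import Mathlib

/-
At a constant point `u`, the second partial `∂ᵢ∂ⱼ e_k` (for `i ≠ j`) evaluates to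
`u^(k-2)` times the number `C(c-2, k-2)` of `k`-subsets containing `{i, j}`, while the quadratic
part contributes `-1` on the diagonal. The normalisation of `τ` and the identity
`C(c,k) C(k,2) = C(c,2) C(c-2,k-2)` turn the off-diagonal entry into `(k-1)/(c-1)`. A matrix with
`d` on the diagonal and `b` elsewhere is `(d-b) • 1` plus a rank-one matrix, so the matrix
determinant lemma gives its determinant `(d-b)^(c-1) (d + (c-1) b)`.
-/

open MvPolynomial

/-- The Hessian matrix at `z ∈ ℂ^c` of `g(y) = -(y₁² + ⋯ + y_c²)/2 + e_k(y)`. -/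
noncomputable def hessGesymm (c k : ℕ) (z : Fin c → ℂ) : Matrix (Fin c) (Fin c) ℂ :=
  Matrix.of fun i j =>
    MvPolynomial.eval z (MvPolynomial.pderiv i (MvPolynomial.pderiv j
      (-(MvPolynomial.C (1 / 2 : ℂ) * ∑ l, MvPolynomial.X l ^ 2) +
        MvPolynomial.esymm (Fin c) ℂ k)))

open Finset

namespace MvPolynomial

variable {R σ : Type*} [CommRing R]

lemma eval_const_esymm [Fintype σ] (k : ℕ) (w : R) :
    eval (fun _ => w) (esymm σ R k) = (Fintype.card σ).choose k * w ^ k := by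
  simp only [esymm, map_sum, map_prod, eval_X, prod_const]
  rw [sum_congr rfl fun t ht => by rw [(mem_powersetCard.1 ht).2], sum_const, card_powersetCard,
    card_univ, nsmul_eq_mul]

variable [DecidableEq σ]

lemma pderiv_prod_X (i : σ) (t : Finset σ) :
    pderiv i (∏ l ∈ t, X l : MvPolynomial σ R) = if i ∈ t then ∏ l ∈ t.erase i, X l else 0 := by
  induction t using Finset.induction_on with
  | empty => simp
  | insert a s ha ih =>
    rw [prod_insert ha, pderiv_mul, ih, pderiv_X]
    by_cases hia : i = a
    · subst hia
      simp [ha]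
    · rw [Pi.single_eq_of_ne' hia, zero_mul, zero_add, erase_insert_of_ne (Ne.symm hia),
        prod_insert (fun h => ha (mem_of_mem_erase h))]
      simp [hia, mul_ite]

lemma pderiv_pderiv_prod_X (i j : σ) (t : Finset σ) :
    pderiv i (pderiv j (∏ l ∈ t, X l : MvPolynomial σ R)) =
      if i ≠ j ∧ {i, j} ⊆ t then ∏ l ∈ (t.erase j).erase i, X l else 0 := by
  rw [pderiv_prod_X]
  split_ifs <;> simp_all [pderiv_prod_X, insert_subset_iff]

variable [Fintype σ]

lemma pderiv_pderiv_sum_X_sq (i j : σ) :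
    pderiv i (pderiv j (∑ l, X l ^ 2 : MvPolynomial σ R)) = if i = j then 2 else 0 := by
  have h2 : pderiv i (2 : MvPolynomial σ R) = 0 := by
    rw [← Nat.cast_ofNat, Derivation.map_natCast]
  simp [pderiv_X, Pi.single_apply, eq_comm, h2]

lemma eval_const_pderiv_pderiv_esymm {k : ℕ} (hk : 2 ≤ k) (i j : σ) (w : R) :
    eval (fun _ => w) (pderiv i (pderiv j (esymm σ R k))) =
      if i = j then 0 else ((Fintype.card σ - 2).choose (k - 2) : R) * w ^ (k - 2) := by
  simp only [esymm, map_sum, pderiv_pderiv_prod_X, apply_ite (eval _), map_prod, eval_X, map_zero,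
    prod_const]
  split_ifs with hij
  · simp [hij]
  · have hpair : #{i, j} = 2 := card_pair hij
    simp only [ne_eq, hij, not_false_eq_true, true_and]
    rw [← sum_filter, sum_congr rfl fun t ht => ?_, sum_const,
      card_filter_powersetCard_subset _ _ _ (subset_univ _) (hpair ▸ hk), hpair, card_univ,
      nsmul_eq_mul]
    obtain ⟨ht, hijt⟩ := mem_filter.1 ht
    rw [insert_subset_iff, singleton_subset_iff] at hijt
    rw [card_erase_of_mem (mem_erase.2 ⟨hij, hijt.1⟩), card_erase_of_mem hijt.2,
      (mem_powersetCard.1 ht).2, Nat.sub_sub]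

end MvPolynomial

namespace Matrix

theorem det_of_ite_eq {n K : Type*} [Fintype n] [DecidableEq n] [Nonempty n] [Field K]
    (d b : K) :
    (of fun i j : n => if i = j then d else b).det =
      (d - b) ^ (Fintype.card n - 1) * (d + (Fintype.card n - 1) * b) := by
  obtain ⟨m, hm⟩ : ∃ m, Fintype.card n = m + 1 := Nat.exists_eq_add_one.2 Fintype.card_pos
  rcases eq_or_ne d b with rfl | hdb
  · rcases m with _ | m
    · have : Unique n := (Fintype.card_eq_one_iff_nonempty_unique.1 hm).some
      simp [det_unique]
    · obtain ⟨i, j, hij⟩ := Fintype.exists_pair_of_one_lt_card (α := n) (by omega)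
      rw [det_zero_of_row_eq hij (by ext; simp), hm]
      simp
  · have hdb' : d - b ≠ 0 := sub_ne_zero.2 hdb
    have hrankOne : (of fun i j : n => if i = j then d else b) = (d - b) • (1 +
        replicateCol Unit (fun _ : n => b / (d - b)) * replicateRow Unit (fun _ => (1 : K))) := by
      ext i j
      simp only [of_apply, smul_apply, add_apply, one_apply, mul_apply, replicateCol_apply,
        replicateRow_apply, Fintype.sum_unique, mul_one, smul_eq_mul]
      split_ifs <;> field_simp <;> ring
    rw [hrankOne, det_smul, det_one_add_replicateCol_mul_replicateRow]
    simp only [hm, dotProduct, one_mul, sum_const, card_univ, nsmul_eq_mul, Nat.cast_add,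
      Nat.cast_one, add_tsub_cancel_right, add_sub_cancel_right]
    field_simp
    ring

end Matrix

lemma hessGesymm_const_apply {c k : ℕ} (hk : 2 ≤ k) (u : ℂ) (i j : Fin c) :
    hessGesymm c k (fun _ => u) i j =
      if i = j then -1 else ((c - 2).choose (k - 2) : ℂ) * u ^ (k - 2) := by
  simp only [hessGesymm, Matrix.of_apply, map_add, map_neg, pderiv_C_mul, pderiv_pderiv_sum_X_sq,
    eval_const_pderiv_pderiv_esymm hk, Fintype.card_fin]
  split_ifs <;> norm_num

lemma choose_sub_two_mul_pow_eq_div {K : Type*} [Field K] [CharZero K] {c k : ℕ} (hk : 2 ≤ k)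
    {τ w : K} (hτ : τ ≠ 0) (hτk : τ ^ ((2 : ℤ) - k) = k * c.choose k * w ^ k)
    (hw : w ^ 2 * c = 1) (hc : (c : K) ≠ 1) :
    (c - 2).choose (k - 2) * (τ * w) ^ (k - 2) = (k - 1) / (c - 1) := by
  have hchoose := congrArg (Nat.cast : ℕ → K) (Nat.choose_mul (n := c) (k := k) hk)
  push_cast [Nat.cast_choose_two] at hchoose
  obtain ⟨m, rfl⟩ := Nat.exists_eq_add_of_le' hk
  rw [Nat.add_sub_cancel] at hchoose ⊢
  have hτm : τ ^ m * ((m + 2 : ℕ) * c.choose (m + 2) * w ^ (m + 2)) = 1 := by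
    rw [← hτk, ← zpow_natCast, ← zpow_add₀ hτ]; push_cast; simp
  set P := (τ * w) ^ m
  have hP : P * (m + 2 : ℕ) * c.choose (m + 2) = c := by
    linear_combination (-(P * (m + 2 : ℕ) * c.choose (m + 2))) * hw + c * hτm
  rw [eq_div_iff (sub_ne_zero.2 hc)]
  push_cast at hP hchoose ⊢
  -- `hP` determines `P` only up to the factor `c`, which `w ^ 2 * c = 1` cancels
  linear_combination (-((c - 2).choose m * P * (c - 1) - (m + 2 - 1))) * hw
    + w ^ 2 * (m + 2 - 1) * hP - 2 * w ^ 2 * P * hchoose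

theorem stmt_16 (k c : ℕ) (hk : 3 ≤ k) (hkc : k < c)
    (ε : ℝ) (hε : ε = 1 ∨ ε = -1)
    (x : Fin c → ℝ) (hx : ∀ i, x i = ε * (c : ℝ) ^ (-(1 : ℝ) / 2))
    (τ : ℂ) (hτ : τ ≠ 0)
    (hτk : τ ^ ((2 : ℤ) - (k : ℤ)) =
      (k : ℂ) * ((MvPolynomial.eval x (MvPolynomial.esymm (Fin c) ℝ k) : ℝ) : ℂ))
    (z : Fin c → ℂ) (hz : ∀ i, z i = τ * (x i : ℂ)) :
    (∀ i, hessGesymm c k z i i = -1) ∧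
    (∀ i j, i ≠ j →
      hessGesymm c k z i j = (((k : ℝ) - 1) / ((c : ℝ) - 1) : ℝ)) ∧
    (hessGesymm c k z).det =
      (-1 : ℂ) ^ (c - 1) * ((((k : ℝ) - 1) / ((c : ℝ) - 1) : ℝ) + 1) ^ (c - 1) *
        ((((k : ℝ) - 1) / ((c : ℝ) - 1) : ℝ) * ((c : ℂ) - 1) - 1) := by
  set w : ℝ := ε * (c : ℝ) ^ (-(1 : ℝ) / 2)
  have hxw : x = fun _ => w := funext hx
  have hzw : z = fun _ => τ * w := funext fun i => by rw [hz, hx]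
  have hw : w ^ 2 * c = 1 := by
    have hε2 : ε ^ 2 = 1 := by rcases hε with rfl | rfl <;> norm_num
    have hc : (c : ℝ) ≠ 0 := Nat.cast_ne_zero.2 (by omega)
    rw [mul_pow, hε2, one_mul, ← Real.rpow_mul_natCast (Nat.cast_nonneg c)]
    norm_num [Real.rpow_neg_one, hc]
  have hoff : ((c - 2).choose (k - 2) : ℂ) * (τ * w) ^ (k - 2) =
      (((k : ℝ) - 1) / ((c : ℝ) - 1) : ℝ) := by
    push_cast
    refine choose_sub_two_mul_pow_eq_div (by omega) hτ ?_ (by exact_mod_cast hw)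
      (by exact_mod_cast (by omega : c ≠ 1))
    rw [hτk, hxw, eval_const_esymm, Fintype.card_fin]
    push_cast
    ring
  have hH : hessGesymm c k z = Matrix.of fun i j =>
      if i = j then -1 else ((((k : ℝ) - 1) / ((c : ℝ) - 1) : ℝ) : ℂ) := by
    ext i j
    rw [hzw, hessGesymm_const_apply (by omega), hoff]
    rfl
  refine ⟨fun i => by simp [hH], fun i j hij => by simp [hH, hij], ?_⟩
  have : Nonempty (Fin c) := ⟨⟨0, by omega⟩⟩
  rw [hH, Matrix.det_of_ite_eq, Fintype.card_fin]
  generalize ((((k : ℝ) - 1) / ((c : ℝ) - 1) : ℝ) : ℂ) = G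
  rw [show (-1 : ℂ) - G = -1 * (G + 1) by ring, mul_pow]
  ring
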